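/- arXiv:2309.03077 — 9 statements merged into one kernel-verified Lean document; each statement's English description precedes it below -/
import Mathlib

section
/- Let R be a commutative ring, n a natural number, E the exterior algebra of Fin n → R with generators ι(e_i) and ordered basis products v_I for I ⊆ Fin n, and reverse the canonical anti-automorphism. Then for every I : Finset (Fin n), reverse(v_I) · v_{Iᶜ} = (−1)^(Σ_{i ∈ I} i) • v_{univ}, where the exponent is the sum of the elements of I as natural numbers (0-indexed; this equals the paper's (ΣI) − |I| under 1-indexing) and v_{univ} is the product of all generators in increasing order. -/
open CliffordAlgebra

/-- The ordered basis product `v_I` in the exterior algebra of `Fin n → R`, realized as the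
Clifford algebra of the zero quadratic form: the product, in increasing order of indices,
of the generators `ι (Pi.single i 1)` for `i ∈ I`. -/
noncomputable def vI {R : Type*} [CommRing R] {n : ℕ} (I : Finset (Fin n)) :
    CliffordAlgebra (0 : QuadraticForm R (Fin n → R)) :=
  ((I.sort (· ≤ ·)).map fun i =>
    CliffordAlgebra.ι (0 : QuadraticForm R (Fin n → R)) (Pi.single i (1 : R))).prod

/-!
Write `e_i` for the generators and peel off the least element `a` of `I`. Then
`reverse v_I = reverse v_{I \ a} * e_a` and `v_{Iᶜ} = v_{[0, a)} * v_{(a, n) \ I}`. Moving `e_a`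
past the `a` generators of `v_{[0, a)}` costs `(-1)^a` and leaves
`v_{[0, a)} * e_a * v_{(a, n) \ I} = v_{(I \ a)ᶜ}`, so induction on `I` collects `(-1)^(∑ I)`.
-/

open Finset

theorem Finset.sort_union_of_forall_lt {α : Type*} [LinearOrder α] {s t : Finset α}
    (h : ∀ x ∈ s, ∀ y ∈ t, x < y) :
    (s ∪ t).sort (· ≤ ·) = s.sort (· ≤ ·) ++ t.sort (· ≤ ·) := by
  have hdisj : Disjoint s t := disjoint_left.2 fun x hs ht => (h x hs x ht).false
  refine List.Perm.eq_of_pairwise' (pairwise_sort _ _) ?_ ?_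
  · exact List.pairwise_append.2 ⟨pairwise_sort _ _, pairwise_sort _ _,
      fun x hx y hy => (h x (by simpa using hx) y (by simpa using hy)).le⟩
  · rw [← Multiset.coe_eq_coe, ← Multiset.coe_add, sort_eq, sort_eq, sort_eq,
      ← disjUnion_eq_union _ _ hdisj]
    rfl

theorem ExteriorAlgebra.ι_mul_list_prod_map_ι {R M : Type*} [CommRing R] [AddCommGroup M]
    [Module R M] (m : M) (l : List M) :
    ι R m * (l.map (ι R)).prod = (-1 : R) ^ l.length • ((l.map (ι R)).prod * ι R m) := by
  induction l with
  | nil => simp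
  | cons a l ih =>
    have hswap : ι R m * ι R a = -(ι R a * ι R m) :=
      eq_neg_of_add_eq_zero_left (ι_add_mul_swap m a)
    rw [List.map_cons, List.prod_cons, ← mul_assoc, hswap, neg_mul, mul_assoc, ih,
      List.length_cons, pow_succ, mul_neg_one, neg_smul, mul_smul_comm, mul_assoc]

section

variable {R : Type*} [CommRing R] {n : ℕ}

theorem ι_single_mul_vI (i : Fin n) (s : Finset (Fin n)) :
    ExteriorAlgebra.ι R (Pi.single i (1 : R)) * vI s =
      (-1 : R) ^ #s • (vI s * ExteriorAlgebra.ι R (Pi.single i (1 : R))) := by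
  simpa [vI, List.map_map, Function.comp_def] using
    ExteriorAlgebra.ι_mul_list_prod_map_ι (R := R) (Pi.single i 1)
      ((s.sort (· ≤ ·)).map (Pi.single · 1))

theorem vI_union_of_forall_lt {s t : Finset (Fin n)} (h : ∀ x ∈ s, ∀ y ∈ t, x < y) :
    vI (R := R) (s ∪ t) = vI s * vI t := by
  rw [vI, sort_union_of_forall_lt h, List.map_append, List.prod_append, vI, vI]

theorem vI_insert_of_forall_lt {a : Fin n} {s : Finset (Fin n)} (h : ∀ x ∈ s, a < x) :
    vI (R := R) (insert a s) = ExteriorAlgebra.ι R (Pi.single a (1 : R)) * vI s := by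
  rw [vI, sort_insert _ (fun x hx => (h x hx).le) fun ha => (h a ha).false,
    List.map_cons, List.prod_cons, vI]

end

theorem reverse_vI_mul_vI_compl {R : Type*} [CommRing R] {n : ℕ} (I : Finset (Fin n)) :
    reverse (vI (R := R) I) * vI Iᶜ =
      ((-1 : R) ^ (∑ i ∈ I, (i : ℕ))) • vI (Finset.univ : Finset (Fin n)) := by
  induction I using Finset.induction_on_min with
  | empty => simp [vI]
  | insert a s has ih =>
    have hcompl : (insert a s)ᶜ = Iio a ∪ (Ioi a \ s) := by
      ext x
      have := has x
      simp only [mem_compl, mem_insert, mem_union, mem_Iio, mem_sdiff, mem_Ioi]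
      grind
    have hcompl' : sᶜ = Iio a ∪ insert a (Ioi a \ s) := by
      ext x
      have := has x
      simp only [mem_compl, mem_insert, mem_union, mem_Iio, mem_sdiff, mem_Ioi]
      grind
    calc reverse (vI (insert a s)) * vI (insert a s)ᶜ
        = reverse (vI s) * (ExteriorAlgebra.ι R (Pi.single a 1) * vI (Iio a)) *
            vI (Ioi a \ s) := by
          rw [vI_insert_of_forall_lt has, reverse.map_mul, reverse_ι, hcompl,
            vI_union_of_forall_lt (by grind)]
          simp only [mul_assoc]
      _ = (-1 : R) ^ (a : ℕ) • (reverse (vI s) * vI sᶜ) := by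
          rw [ι_single_mul_vI, Fin.card_Iio, hcompl', vI_union_of_forall_lt (by grind),
            vI_insert_of_forall_lt (by grind), mul_smul_comm, smul_mul_assoc, mul_assoc,
            mul_assoc]
      _ = (-1 : R) ^ (∑ i ∈ insert a s, (i : ℕ)) • vI univ := by
          rw [ih, smul_smul, ← pow_add, sum_insert fun ha => (has a ha).false]
end

section
/- Let R be a commutative ring and n a natural number with n ≡ 0 or 1 (mod 4). On the free R-module M = Finset (Fin n) → R define B(α, β) = Σ_{I ⊆ Fin n} (−1)^(Σ_{i ∈ I} i) · α(I) · β(Iᶜ). Then B is symmetric: B(α, β) = B(β, α) for all α, β. -/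
/-- The coordinate expression of the bilinear form `b_∧(x, y) = π(x̄ ∧ y)` on the exterior
algebra `∧(R^n)` in the basis `{v_I}`. -/
def Bwedge {R : Type*} [CommRing R] {n : ℕ} (α β : Finset (Fin n) → R) : R :=
  ∑ I : Finset (Fin n), (-1 : R) ^ (∑ i ∈ I, (i : ℕ)) * α I * β Iᶜ

lemma even_gauss {n : ℕ} (hn : n % 4 = 0 ∨ n % 4 = 1) :
    Even (∑ i ∈ Finset.range n, i) := by
  have h := Finset.sum_range_id_mul_two n
  rw [Nat.even_iff]
  rcases hn with h4 | h4
  · obtain ⟨k, rfl⟩ : ∃ k, n = 4 * k := ⟨n / 4, by omega⟩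
    have e : (4 * k) * (4 * k - 1) = 4 * (k * (4 * k - 1)) := by rw [mul_assoc]
    omega
  · obtain ⟨k, rfl⟩ : ∃ k, n = 4 * k + 1 := ⟨n / 4, by omega⟩
    have e1 : 4 * k + 1 - 1 = 4 * k := rfl
    have e : (4 * k + 1) * (4 * k + 1 - 1) = 4 * ((4 * k + 1) * k) := by
      rw [e1]; ring
    omega

theorem Bwedge_symm {R : Type*} [CommRing R] {n : ℕ} (hn : n % 4 = 0 ∨ n % 4 = 1)
    (α β : Finset (Fin n) → R) :
    Bwedge α β = Bwedge β α := by
  have key : ∀ I : Finset (Fin n),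
      ((-1 : R) ^ (∑ i ∈ I, (i : ℕ)) = (-1 : R) ^ (∑ i ∈ Iᶜ, (i : ℕ))) := by
    intro I
    have htot : (∑ i ∈ I, (i : ℕ)) + ∑ i ∈ Iᶜ, (i : ℕ) = ∑ i : Fin n, (i : ℕ) :=
      Finset.sum_add_sum_compl I _
    have hev : Even ((∑ i ∈ I, (i : ℕ)) + ∑ i ∈ Iᶜ, (i : ℕ)) := by
      rw [htot]
      have h2 : (∑ i : Fin n, (i : ℕ)) = ∑ i ∈ Finset.range n, i :=
        Fin.sum_univ_eq_sum_range (fun i => i) n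
      rw [h2]
      exact even_gauss hn
    rcases Nat.even_or_odd (∑ i ∈ I, (i : ℕ)) with he | ho
    · have he' : Even (∑ i ∈ Iᶜ, (i : ℕ)) := (Nat.even_add.mp hev).mp he
      rw [he.neg_one_pow, he'.neg_one_pow]
    · have ho' : Odd (∑ i ∈ Iᶜ, (i : ℕ)) := by
        rcases Nat.even_or_odd (∑ i ∈ Iᶜ, (i : ℕ)) with h | h
        · exact absurd ((Nat.even_add.mp hev).mpr h) (Nat.not_even_iff_odd.mpr ho)
        · exact h
      rw [ho.neg_one_pow, ho'.neg_one_pow]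
  unfold Bwedge
  refine Fintype.sum_equiv ⟨compl, compl, compl_compl, compl_compl⟩ _ _ fun I => ?_
  simp only [Equiv.coe_fn_mk, compl_compl]
  rw [key I]
  ring
end

section
/- Let R be a commutative ring and n a natural number with n ≡ 2 or 3 (mod 4). On the free R-module M = Finset (Fin n) → R define B(α, β) = Σ_{I ⊆ Fin n} (−1)^(Σ_{i ∈ I} i) · α(I) · β(Iᶜ). Then B is alternating: B(α, α) = 0 for all α. -/
lemma odd_gauss {n : ℕ} (hn : n % 4 = 2 ∨ n % 4 = 3) :
    Odd (∑ i ∈ Finset.range n, i) := by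
  have h2 := Finset.sum_range_id_mul_two n
  rcases hn with h | h
  · have hk : n = 4 * (n / 4) + 2 := by omega
    set k := n / 4
    have : n * (n - 1) = 16 * (k * k) + 12 * k + 2 := by
      rw [hk]; simp; ring
    rw [this] at h2
    rcases Nat.even_or_odd (∑ i ∈ Finset.range n, i) with he | ho
    · obtain ⟨m, hm⟩ := he; omega
    · exact ho
  · have hk : n = 4 * (n / 4) + 3 := by omega
    set k := n / 4
    have : n * (n - 1) = 16 * (k * k) + 20 * k + 6 := by
      rw [hk]; simp; ring
    rw [this] at h2
    rcases Nat.even_or_odd (∑ i ∈ Finset.range n, i) with he | ho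
    · obtain ⟨m, hm⟩ := he; omega
    · exact ho

lemma neg_one_pow_add_eq_zero {R : Type*} [CommRing R] {a b : ℕ} (h : Odd (a + b)) :
    (-1 : R) ^ a + (-1 : R) ^ b = 0 := by
  rcases Nat.even_or_odd a with ha | ha
  · have hb : Odd b := by
      rw [Nat.odd_iff] at h ⊢; rw [Nat.even_iff] at ha; omega
    rw [ha.neg_one_pow, hb.neg_one_pow]; ring
  · have hb : Even b := by
      rw [Nat.odd_iff] at h ha; rw [Nat.even_iff]; omega
    rw [ha.neg_one_pow, hb.neg_one_pow]; ring

theorem Bwedge_alternating {R : Type*} [CommRing R] {n : ℕ} (hn : n % 4 = 2 ∨ n % 4 = 3)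
    (α : Finset (Fin n) → R) :
    Bwedge α α = 0 := by
  have hn0 : 0 < n := by omega
  unfold Bwedge
  apply Finset.sum_ninvolution (g := fun I => Iᶜ)
  · intro I
    rw [compl_compl]
    have hsum : (∑ i ∈ I, (i : ℕ)) + (∑ i ∈ Iᶜ, (i : ℕ)) = ∑ i : Fin n, (i : ℕ) :=
      Finset.sum_add_sum_compl I _
    have huniv : (∑ i : Fin n, (i : ℕ)) = ∑ i ∈ Finset.range n, i :=
      Fin.sum_univ_eq_sum_range (fun i => i) n
    have hodd : Odd ((∑ i ∈ I, (i : ℕ)) + (∑ i ∈ Iᶜ, (i : ℕ))) := by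
      rw [hsum, huniv]; exact odd_gauss hn
    have := neg_one_pow_add_eq_zero (R := R) hodd
    calc (-1 : R) ^ (∑ i ∈ I, (i : ℕ)) * α I * α Iᶜ
          + (-1 : R) ^ (∑ i ∈ Iᶜ, (i : ℕ)) * α Iᶜ * α I
        = ((-1 : R) ^ (∑ i ∈ I, (i : ℕ)) + (-1 : R) ^ (∑ i ∈ Iᶜ, (i : ℕ)))
            * (α I * α Iᶜ) := by ring
      _ = 0 := by rw [this, zero_mul]
  · intro I _ h
    have h0 : (⟨0, hn0⟩ : Fin n) ∈ I ↔ (⟨0, hn0⟩ : Fin n) ∉ I := by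
      conv_rhs => rw [← h]
      simp [Finset.mem_compl]
    tauto
  · intro I; exact Finset.mem_univ _
  · intro I; exact compl_compl I
end

section
/- Let R be a commutative ring and n a natural number. On the free R-module M = Finset (Fin n) → R define B(α, β) = Σ_{I ⊆ Fin n} (−1)^(Σ_{i ∈ I} i) · α(I) · β(Iᶜ). Then B is regular: the induced linear map M → Dual_R(M), α ↦ B(α, ·), is bijective. -/
/-- For a fixed `α`, the dual element `B(α, ·)`, i.e. `β ↦ Bwedge α β`, as a linear map. -/
noncomputable def BwedgeDual {R : Type*} [CommRing R] {n : ℕ} (α : Finset (Fin n) → R) :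
    Module.Dual R (Finset (Fin n) → R) :=
  ∑ I : Finset (Fin n), ((-1 : R) ^ (∑ i ∈ I, (i : ℕ)) * α I) •
    (LinearMap.proj Iᶜ : (Finset (Fin n) → R) →ₗ[R] R)

theorem BwedgeDual_apply {R : Type*} [CommRing R] {n : ℕ} (α β : Finset (Fin n) → R) :
    BwedgeDual α β = Bwedge α β := by
  simp [BwedgeDual, Bwedge, mul_assoc]

lemma BwedgeDual_single {R : Type*} [CommRing R] {n : ℕ} (α : Finset (Fin n) → R)
    (J : Finset (Fin n)) :
    BwedgeDual α (Pi.single J 1) = (-1 : R) ^ (∑ i ∈ Jᶜ, (i : ℕ)) * α Jᶜ := by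
  rw [BwedgeDual_apply, Bwedge]
  rw [Fintype.sum_eq_single Jᶜ (fun I hI => by
      have h : Iᶜ ≠ J := fun h => hI (by simp [← h])
      simp [Pi.single_apply, h]), compl_compl, Pi.single_eq_same, mul_one]

/-- `B` is regular: the induced map `M → Dual M`, `α ↦ B(α, ·)`, is bijective. -/
theorem Bwedge_regular {R : Type*} [CommRing R] (n : ℕ) :
    Function.Bijective (fun α : Finset (Fin n) → R => BwedgeDual α) := by
  rw [Function.bijective_iff_has_inverse]
  refine ⟨fun f I => (-1 : R) ^ (∑ i ∈ I, (i : ℕ)) * f (Pi.single Iᶜ 1), ?_, ?_⟩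
  · intro α
    funext I
    simp only [BwedgeDual_single, compl_compl, ← mul_assoc, ← pow_add]
    rw [show ((-1 : R)) ^ (∑ i ∈ I, (i : ℕ) + ∑ i ∈ I, (i : ℕ)) = 1 by
      rw [← two_mul, pow_mul]; simp]
    ring
  · intro f
    apply Module.Basis.ext (Pi.basisFun R (Finset (Fin n)))
    intro J
    simp only [Pi.basisFun_apply, BwedgeDual_single, compl_compl, ← mul_assoc, ← pow_add]
    rw [show ((-1 : R)) ^ (∑ i ∈ Jᶜ, (i : ℕ) + ∑ i ∈ Jᶜ, (i : ℕ)) = 1 by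
      rw [← two_mul, pow_mul]; simp]
    ring
end

section
/- Let R be a commutative ring and n ≥ 1 a natural number. On M = Finset (Fin n) → R define q(α) = Σ_{I ⊆ Fin n, 0 ∈ I} (−1)^(Σ_{i ∈ I} i) · α(I) · α(Iᶜ). Then q is hyperbolic: there exists an R-linear automorphism φ of M such that for all α, q(φ(α)) = Σ_{I ⊆ Fin n, 0 ∈ I} α(I) · α(Iᶜ). -/
/-- The coordinate expression of the quadratic form `q_∧` on the exterior algebra `∧(R^n)`
in the basis `{v_I}` (with `0` playing the role of the index `1` of 1-indexed notation). -/
def qwedge {R : Type*} [CommRing R] {n : ℕ} [NeZero n] (α : Finset (Fin n) → R) : R :=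
  ∑ I ∈ Finset.univ.filter (fun I : Finset (Fin n) => (0 : Fin n) ∈ I),
    (-1 : R) ^ (∑ i ∈ I, (i : ℕ)) * α I * α Iᶜ

/-- `q_∧` is hyperbolic: a linear change of coordinates takes it to the standard hyperbolic
form pairing the coordinate at `I` (with `0 ∈ I`) with the coordinate at `Iᶜ`. -/
theorem qwedge_hyperbolic {R : Type*} [CommRing R] (n : ℕ) [NeZero n] :
    ∃ φ : (Finset (Fin n) → R) ≃ₗ[R] (Finset (Fin n) → R),
      ∀ α : Finset (Fin n) → R,
        qwedge (φ α) =
          ∑ I ∈ Finset.univ.filter (fun I : Finset (Fin n) => (0 : Fin n) ∈ I),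
            α I * α Iᶜ := by
  classical
  set u : Finset (Fin n) → Rˣ := fun I =>
    if (0 : Fin n) ∈ I then (-1 : Rˣ) ^ (∑ i ∈ I, (i : ℕ)) else 1 with hu
  refine ⟨LinearEquiv.piCongrRight (fun I => LinearEquiv.smulOfUnit (u I)), fun α => ?_⟩
  unfold qwedge
  refine Finset.sum_congr rfl (fun I hI => ?_)
  rw [Finset.mem_filter] at hI
  have h0 : (0 : Fin n) ∈ I := hI.2
  have h0c : (0 : Fin n) ∉ Iᶜ := by simp [h0]
  have hI1 : u I = (-1 : Rˣ) ^ (∑ i ∈ I, (i : ℕ)) := by simp [hu, h0]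
  have hI2 : u Iᶜ = 1 := by simp [hu, h0c]
  show (-1 : R) ^ (∑ i ∈ I, (i : ℕ)) * (u I • α I) * (u Iᶜ • α Iᶜ) = α I * α Iᶜ
  rw [hI1, hI2, one_smul, Units.smul_def, smul_eq_mul]
  push_cast
  have h : ((-1 : R) ^ (∑ i ∈ I, (i : ℕ))) * ((-1 : R) ^ (∑ i ∈ I, (i : ℕ))) = 1 := by
    rw [← pow_add, ← two_mul, pow_mul, neg_one_sq, one_pow]
  linear_combination (α I * α Iᶜ) * h
end

section
/- Let R be a commutative ring and n ≥ 3. Let M = (Fin n → R) × (Fin n → R) with hyperbolic quadratic form Q(x, y) = Σ_i x(i)·y(i), whose polar form is b((x,y),(x',y')) = Σ_i (x(i)·y'(i) + x'(i)·y(i)). Let Cl(Q) be the Clifford algebra of Q with structure map ι and canonical involution reverse (the anti-automorphism fixing every ι(m)). Let T : M ⊗_R M → R be the linear map induced by (m₁, m₂) ↦ b(m₁, m₂), and let C : M ⊗_R M → Cl(Q) be the linear map induced by (m₁, m₂) ↦ ι(m₁)·ι(m₂). Then C maps the kernel of T into the image of the linear map (id − reverse) : Cl(Q) → Cl(Q).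 (In other words, sections of trace zero are carried by the canonical map into alternating elements of the Clifford algebra.) -/
open CliffordAlgebra TensorProduct

/-- The bilinear map `((x, y), (x', y')) ↦ Σ_i x i * y' i` on `(Fin n → R) × (Fin n → R)`. -/
noncomputable def hypBilin (R : Type*) [CommRing R] (n : ℕ) :
    ((Fin n → R) × (Fin n → R)) →ₗ[R] ((Fin n → R) × (Fin n → R)) →ₗ[R] R :=
  LinearMap.mk₂ R (fun p q => ∑ i, p.1 i * q.2 i)
    (fun m₁ m₂ q => by simp [add_mul, Finset.sum_add_distrib])
    (fun c m q => by simp [Finset.mul_sum, mul_assoc])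
    (fun m q₁ q₂ => by simp [mul_add, Finset.sum_add_distrib])
    (fun c m q => by simp [Finset.mul_sum, mul_left_comm])

/-- The hyperbolic quadratic form `Q(x, y) = Σ_i x i * y i` on `(Fin n → R) × (Fin n → R)`. -/
noncomputable def hypQ (R : Type*) [CommRing R] (n : ℕ) :
    QuadraticForm R ((Fin n → R) × (Fin n → R)) :=
  LinearMap.BilinMap.toQuadraticMap (hypBilin R n)

theorem hypQ_apply (R : Type*) [CommRing R] (n : ℕ) (p : (Fin n → R) × (Fin n → R)) :
    hypQ R n p = ∑ i, p.1 i * p.2 i := rfl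

/-- The "reduced trace": the linear map on `M ⊗ M` induced by the polar form of `hypQ`. -/
noncomputable def trdT (R : Type*) [CommRing R] (n : ℕ) :
    (((Fin n → R) × (Fin n → R)) ⊗[R] ((Fin n → R) × (Fin n → R))) →ₗ[R] R :=
  TensorProduct.lift (QuadraticMap.polarBilin (hypQ R n))

/-- The "canonical map": the linear map on `M ⊗ M` induced by `(m₁, m₂) ↦ ι m₁ * ι m₂`. -/
noncomputable def canonC (R : Type*) [CommRing R] (n : ℕ) :
    (((Fin n → R) × (Fin n → R)) ⊗[R] ((Fin n → R) × (Fin n → R))) →ₗ[R]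
      CliffordAlgebra (hypQ R n) :=
  TensorProduct.lift
    ((LinearMap.mul R (CliffordAlgebra (hypQ R n))).compl₁₂ (ι (hypQ R n)) (ι (hypQ R n)))

/-!
Write `A` for the alternating elements, the range of `id - reverse`. If `(e, f)` is a hyperbolic
pair (`polar e f = 1`) orthogonal to `u` and `v`, then `ι e ι f` commutes with `ι u ι v`, and
expanding `ι v ι u = polar u v - ι u ι v`, `ι f ι e = 1 - ι e ι f` shows
`(id - reverse) (ι e ι f ι u ι v - polar u v • ι e ι f) = ι u ι v - polar u v • ι e ι f`.
So `ι u ι v ≡ polar u v • ι e ι f` modulo `A`. For `n ≥ 3` any two vectors of the hyperbolic basis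
are orthogonal to some standard pair `(e_k, f_k)`, and the products `ι e_k ι f_k` are all congruent
modulo `A`; hence `C ≡ T • ι e₀ ι f₀` modulo `A`, which vanishes on `ker T`.
-/

theorem commute_mul_of_anticommute {A : Type*} [Ring A] {a b c : A}
    (ha : a * c = -(c * a)) (hb : b * c = -(c * b)) : Commute (a * b) c := by
  calc a * b * c = -(a * c * b) := by rw [mul_assoc, hb, mul_neg, mul_assoc]
  _ = c * (a * b) := by rw [ha, neg_mul, neg_neg, mul_assoc]

namespace CliffordAlgebra

variable {R M : Type*} [CommRing R] [AddCommGroup M] [Module R M] {Q : QuadraticForm R M}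

variable (Q) in
def alternating : Submodule R (CliffordAlgebra Q) :=
  LinearMap.range (LinearMap.id - (reverse : CliffordAlgebra Q →ₗ[R] CliffordAlgebra Q))

theorem ι_mul_ι_sub_polar_smul_mem_alternating {e f u v : M} (hef : QuadraticMap.polar Q e f = 1)
    (heu : Q.IsOrtho e u) (hev : Q.IsOrtho e v) (hfu : Q.IsOrtho f u) (hfv : Q.IsOrtho f v) :
    ι Q u * ι Q v - QuadraticMap.polar Q u v • (ι Q e * ι Q f) ∈ alternating Q := by
  set c := QuadraticMap.polar Q u v
  have hfe : ι Q f * ι Q e = 1 - ι Q e * ι Q f := by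
    rw [eq_sub_iff_add_eq, add_comm, ι_mul_ι_add_swap, hef, map_one]
  have hvu : ι Q v * ι Q u = c • 1 - ι Q u * ι Q v := by
    rw [eq_sub_iff_add_eq, add_comm, ι_mul_ι_add_swap, Algebra.algebraMap_eq_smul_one]
  have hcomm : Commute (ι Q e * ι Q f) (ι Q u * ι Q v) :=
    (commute_mul_of_anticommute (ι_mul_ι_comm_of_isOrtho heu)
      (ι_mul_ι_comm_of_isOrtho hfu)).mul_right
      (commute_mul_of_anticommute (ι_mul_ι_comm_of_isOrtho hev) (ι_mul_ι_comm_of_isOrtho hfv))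
  refine ⟨ι Q e * ι Q f * (ι Q u * ι Q v) - c • (ι Q e * ι Q f), ?_⟩
  simp only [LinearMap.sub_apply, LinearMap.id_apply, map_sub, map_smul, reverse.map_mul,
    reverse_ι]
  rw [hvu, hfe]
  simp only [mul_sub, sub_mul, mul_one, one_mul, smul_mul_assoc, ← hcomm.eq]
  module

end CliffordAlgebra

section Hyperbolic
variable (R : Type*) [CommRing R] (n : ℕ)

noncomputable def hypBasis : Module.Basis (Fin n ⊕ Fin n) R ((Fin n → R) × (Fin n → R)) :=
  (Pi.basisFun R (Fin n)).prod (Pi.basisFun R (Fin n))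

variable {R n}

theorem polar_hypBasis (p q : Fin n ⊕ Fin n) :
    QuadraticMap.polar (hypQ R n) (hypBasis R n p) (hypBasis R n q) =
      if p = q.swap then 1 else 0 := by
  rw [hypQ, LinearMap.BilinMap.polar_toQuadraticMap]
  rcases p with i | i <;> rcases q with j | j <;>
    simp [hypBasis, hypBilin, Pi.single_apply, eq_comm]

theorem isOrtho_hypBasis {k : Fin n} {p : Fin n ⊕ Fin n} (hk : k ≠ p.elim id id) :
    (hypQ R n).IsOrtho (hypBasis R n (.inl k)) (hypBasis R n p) ∧
      (hypQ R n).IsOrtho (hypBasis R n (.inr k)) (hypBasis R n p) := by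
  simp only [← QuadraticMap.isOrtho_polarBilin, QuadraticMap.polarBilin_apply_apply,
    polar_hypBasis]
  rcases p with i | i <;> simp_all

noncomputable def hypPair (k : Fin n) : CliffordAlgebra (hypQ R n) :=
  ι (hypQ R n) (hypBasis R n (.inl k)) * ι (hypQ R n) (hypBasis R n (.inr k))

theorem hypPair_sub_mem_alternating (k l : Fin n) :
    hypPair k - hypPair l ∈ CliffordAlgebra.alternating (hypQ R n) := by
  obtain rfl | hkl := eq_or_ne k l
  · simp
  have hk := isOrtho_hypBasis (R := R) (p := .inl k) hkl.symm
  have hk' := isOrtho_hypBasis (R := R) (p := .inr k) hkl.symm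
  simpa [hypPair, polar_hypBasis] using
    ι_mul_ι_sub_polar_smul_mem_alternating (by simp [polar_hypBasis]) hk.1 hk'.1 hk.2 hk'.2

theorem ι_hypBasis_mul_ι_sub_mem_alternating (hn : 2 < n) (l : Fin n) (p q : Fin n ⊕ Fin n) :
    ι (hypQ R n) (hypBasis R n p) * ι (hypQ R n) (hypBasis R n q) -
      QuadraticMap.polar (hypQ R n) (hypBasis R n p) (hypBasis R n q) • hypPair l ∈
      CliffordAlgebra.alternating (hypQ R n) := by
  obtain ⟨k, hkp, hkq⟩ := Fin.exists_ne_and_ne_of_two_lt (p.elim id id) (q.elim id id) hn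
  have hp := isOrtho_hypBasis (R := R) hkp
  have hq := isOrtho_hypBasis (R := R) hkq
  have hk := ι_mul_ι_sub_polar_smul_mem_alternating (by simp [polar_hypBasis]) hp.1 hq.1 hp.2 hq.2
  rw [← sub_add_sub_cancel _
    (QuadraticMap.polar (hypQ R n) (hypBasis R n p) (hypBasis R n q) • hypPair k), ← smul_sub]
  exact add_mem hk (Submodule.smul_mem _ _ (hypPair_sub_mem_alternating k l))

end Hyperbolic

/-- Trace-zero sections are carried by the canonical map into alternating elements of the
Clifford algebra. -/
theorem canonC_ker_trd_mem_alt {R : Type*} [CommRing R] {n : ℕ} (hn : 3 ≤ n)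
    (z : ((Fin n → R) × (Fin n → R)) ⊗[R] ((Fin n → R) × (Fin n → R)))
    (hz : z ∈ LinearMap.ker (trdT R n)) :
    canonC R n z ∈ LinearMap.range
      (LinearMap.id - (reverse (Q := hypQ R n) : CliffordAlgebra (hypQ R n) →ₗ[R] CliffordAlgebra (hypQ R n))) := by
  set A := CliffordAlgebra.alternating (hypQ R n)
  have hC : A.mkQ ∘ₗ canonC R n = (trdT R n).smulRight (A.mkQ (hypPair ⟨0, by omega⟩)) := by
    refine TensorProduct.ext (LinearMap.ext_basis (hypBasis R n) (hypBasis R n) fun p q => ?_)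
    simp only [canonC, trdT, LinearMap.compr₂ₛₗ_apply, mk_apply, LinearMap.coe_comp,
      Function.comp_apply, lift.tmul, LinearMap.compl₁₂_apply, LinearMap.mul_apply_apply,
      Submodule.mkQ_apply, LinearMap.coe_smulRight, QuadraticMap.polarBilin_apply_apply]
    rw [← sub_eq_zero, ← Submodule.Quotient.mk_smul, ← Submodule.Quotient.mk_sub,
      Submodule.Quotient.mk_eq_zero]
    exact ι_hypBasis_mul_ι_sub_mem_alternating hn _ p q
  have hCz := LinearMap.congr_fun hC z
  rwa [LinearMap.comp_apply, LinearMap.smulRight_apply, LinearMap.mem_ker.mp hz, zero_smul,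
    Submodule.mkQ_apply, Submodule.Quotient.mk_eq_zero] at hCz
end

section
/- Let R be a commutative ring with 2 = 0 in R, and suppose there exists t ∈ R with t² ≠ t. Let M = (Fin 2 → R) × (Fin 2 → R) with hyperbolic quadratic form Q(x, y) = x(0)·y(0) + x(1)·y(1), Clifford algebra Cl(Q), even part Cl₀ = evenOdd Q 0, and canonical involution reverse. Then for every ℓ ∈ Cl₀ with ℓ + reverse(ℓ) = 1, there exists a quadratic-form isometry φ of Q (an R-linear self-map B of M with Q(B m) = Q(m) for all m, inducing the algebra map Cl(φ) = CliffordAlgebra.map φ) such that ℓ − Cl(φ)(ℓ) does NOT lie in the image of Cl₀ under (id − reverse). (That is, no class [ℓ] with ξ([ℓ]) = 1 is stabilized by the orthogonal group, so no canonical semi-trace exists in degree 4.) -/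
/-!
Over a ring with `2 = 0`, the Fock representation of `Cl(Q)` on `Λ R² ≅ R⁴` turns `reverse` into
transposition across the antidiagonal. Hence the `(2, 1)` entry vanishes on every `u - reverse u`,
and `ℓ + reverse ℓ = 1` makes the `(0, 0)` and `(3, 3)` entries of `ℓ` sum to `1`.
For `vₐ = e₀ + a e₁ + f₀` we have `Q vₐ = 1`, and `Cl` of the reflection `ρₐ` in `vₐ` is conjugation
by `ι vₐ`; the `(2, 1)` entry of `ℓ - Cl(ρₐ) ℓ` is then a quadratic polynomial in `a`.
If it vanishes at `a = 0` and `a = 1` it must be `a² - a`, which does not vanish at `t`.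
-/

open CliffordAlgebra

namespace QuadraticMap

variable {R M : Type*} [CommRing R] [AddCommGroup M] [Module R M]

def reflection (Q : QuadraticForm R M) {v : M} (hv : Q v = 1) : Q →qᵢ Q where
  toLinearMap :=
    (Module.reflection (f := polarBilin Q v) (x := v) (by simp [polar_self, hv])).toLinearMap
  map_app' m := by
    change Q (m - polar Q v m • v) = Q m
    rw [sub_eq_add_neg, ← neg_smul, QuadraticMap.map_add (⇑Q), QuadraticMap.map_smul,
      polar_smul_right, polar_comm Q m v, hv]
    simp only [smul_eq_mul]
    ring

theorem reflection_apply (Q : QuadraticForm R M) {v : M} (hv : Q v = 1) (m : M) :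
    Q.reflection hv m = m - polar Q v m • v :=
  rfl

end QuadraticMap

namespace CliffordAlgebra

variable {R M : Type*} [CommRing R] [AddCommGroup M] [Module R M] {Q : QuadraticForm R M}

theorem involute_eq_self_of_two_eq_zero (h2 : (2 : R) = 0) (x : CliffordAlgebra Q) :
    involute x = x := by
  suffices involute = AlgHom.id R (CliffordAlgebra Q) from DFunLike.congr_fun this x
  refine hom_ext (LinearMap.ext fun m => ?_)
  simp only [LinearMap.comp_apply, AlgHom.toLinearMap_apply, involute_ι, AlgHom.id_apply]
  rw [neg_eq_iff_add_eq_zero, ← two_smul R, h2, zero_smul]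

theorem map_reflection {v : M} (hv : Q v = 1) (x : CliffordAlgebra Q) :
    map (Q.reflection hv) x = ι Q v * involute x * ι Q v := by
  have hvv : ι Q v * ι Q v = 1 := by rw [ι_sq_scalar, hv, map_one]
  induction x using CliffordAlgebra.induction with
  | algebraMap r =>
    rw [AlgHom.commutes, AlgHom.commutes, ← Algebra.commutes, mul_assoc, hvv, mul_one]
  | ι m =>
    rw [map_apply_ι, involute_ι, mul_neg, neg_mul, ι_mul_ι_mul_ι, hv, one_smul, ← map_neg,
      neg_sub, QuadraticMap.reflection_apply]
  | mul a b ha hb =>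
    rw [map_mul, map_mul, ha, hb]
    calc ι Q v * involute a * ι Q v * (ι Q v * involute b * ι Q v)
        = ι Q v * involute a * (ι Q v * ι Q v) * involute b * ι Q v := by noncomm_ring
      _ = ι Q v * (involute a * involute b) * ι Q v := by
        rw [hvv, mul_one, mul_assoc _ (involute a)]
  | add a b ha hb => rw [map_add, map_add, ha, hb, mul_add, add_mul]

end CliffordAlgebra

section Fock

open Matrix

variable {R : Type*} [CommRing R]

theorem hypQ_two_apply (m : (Fin 2 → R) × (Fin 2 → R)) :
    hypQ R 2 m = m.1 0 * m.2 0 + m.1 1 * m.2 1 := by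
  simp [hypQ, hypBilin, LinearMap.BilinMap.toQuadraticMap_apply, Fin.sum_univ_two]

/-- The matrix of `(x, y)` acting on `Λ R²` by `x ∧ · + ι_y` in the basis `1, e₀, e₁, e₀ ∧ e₁`;
the signs of the exterior algebra are dropped, which is harmless when `2 = 0`. -/
def fockMatrix : ((Fin 2 → R) × (Fin 2 → R)) →ₗ[R] Matrix (Fin 4) (Fin 4) R where
  toFun m := !![0, m.2 0, m.2 1, 0;
      m.1 0, 0, 0, m.2 1;
      m.1 1, 0, 0, m.2 0;
      0, m.1 1, m.1 0, 0]
  map_add' m n := by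
    ext i j
    fin_cases i <;> fin_cases j <;> simp
  map_smul' c m := by
    ext i j
    fin_cases i <;> fin_cases j <;> simp

theorem fockMatrix_mul_self (h2 : (2 : R) = 0) (m : (Fin 2 → R) × (Fin 2 → R)) :
    fockMatrix m * fockMatrix m = algebraMap R _ (hypQ R 2 m) := by
  have hcomm (a b : R) : a * b + b * a = 0 := by linear_combination a * b * h2
  ext i j
  rw [hypQ_two_apply]
  fin_cases i <;> fin_cases j <;>
    simp [fockMatrix, mul_apply, Fin.sum_univ_four, algebraMap_matrix_apply] <;>
    first | ring1 | exact hcomm _ _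

noncomputable def fockRep (h2 : (2 : R) = 0) :
    CliffordAlgebra (hypQ R 2) →ₐ[R] Matrix (Fin 4) (Fin 4) R :=
  lift (hypQ R 2) ⟨fockMatrix, fockMatrix_mul_self h2⟩

@[simp]
theorem fockRep_ι (h2 : (2 : R) = 0) (m : (Fin 2 → R) × (Fin 2 → R)) :
    fockRep h2 (ι (hypQ R 2) m) = fockMatrix m :=
  lift_ι_apply _ _ _

theorem fockMatrix_transpose_submatrix_rev (m : (Fin 2 → R) × (Fin 2 → R)) :
    (fockMatrix m)ᵀ.submatrix Fin.rev Fin.rev = fockMatrix m := by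
  ext i j
  fin_cases i <;> fin_cases j <;> rfl

theorem fockRep_reverse (h2 : (2 : R) = 0) (x : CliffordAlgebra (hypQ R 2)) :
    fockRep h2 (reverse x) = (fockRep h2 x)ᵀ.submatrix Fin.rev Fin.rev := by
  induction x using CliffordAlgebra.induction with
  | algebraMap r =>
    rw [reverse.commutes, AlgHom.commutes]
    ext i j
    simp [algebraMap_matrix_apply, Fin.rev_inj, eq_comm]
  | ι m => rw [reverse_ι, fockRep_ι, fockMatrix_transpose_submatrix_rev]
  | mul a b ha hb =>
    rw [reverse.map_mul, map_mul, map_mul, ha, hb, transpose_mul,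
      ← submatrix_mul _ _ _ _ _ Fin.rev_bijective]
  | add a b ha hb =>
    rw [reverse.map_add, map_add, map_add, ha, hb, transpose_add]
    rfl

theorem fockRep_apply_two_one_eq_zero_of_mem_range (h2 : (2 : R) = 0)
    {y : CliffordAlgebra (hypQ R 2)}
    (hy : y ∈ LinearMap.range (LinearMap.id - (reverse : CliffordAlgebra (hypQ R 2) →ₗ[R] _))) :
    fockRep h2 y 2 1 = 0 := by
  obtain ⟨u, rfl⟩ := hy
  simp only [LinearMap.sub_apply, LinearMap.id_apply, map_sub, Matrix.sub_apply, fockRep_reverse]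
  exact sub_self _

theorem fockRep_add_reverse_apply_zero_zero (h2 : (2 : R) = 0)
    (x : CliffordAlgebra (hypQ R 2)) :
    fockRep h2 (x + reverse x) 0 0 = fockRep h2 x 0 0 + fockRep h2 x 3 3 := by
  rw [map_add, Matrix.add_apply, fockRep_reverse]
  simp only [submatrix_apply, transpose_apply]
  rfl

def normOneVector (a : R) : (Fin 2 → R) × (Fin 2 → R) := (![1, a], ![1, 0])

theorem hypQ_normOneVector (a : R) : hypQ R 2 (normOneVector a) = 1 := by
  simp [hypQ_two_apply, normOneVector]

theorem fockRep_map_reflection (h2 : (2 : R) = 0) (a : R) (x : CliffordAlgebra (hypQ R 2)) :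
    fockRep h2 (map ((hypQ R 2).reflection (hypQ_normOneVector a)) x) =
      fockMatrix (normOneVector a) * fockRep h2 x * fockMatrix (normOneVector a) := by
  rw [map_reflection, involute_eq_self_of_two_eq_zero h2, map_mul, map_mul, fockRep_ι]

theorem fockMatrix_mul_mul_fockMatrix_apply_two_one (a : R) (X : Matrix (Fin 4) (Fin 4) R) :
    (fockMatrix (normOneVector a) * X * fockMatrix (normOneVector a)) 2 1 =
      a * X 0 0 + a * a * X 0 3 + X 3 0 + a * X 3 3 := by
  simp only [mul_apply, Fin.sum_univ_four]
  simp [fockMatrix, normOneVector]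
  ring

end Fock

theorem no_canonical_semitrace_degree_four_general {R : Type*} [CommRing R] (h2 : (2 : R) = 0)
    (t : R) (ht : t * t ≠ t) (ℓ : CliffordAlgebra (hypQ R 2))
    (hℓ : ℓ + reverse ℓ = 1) :
    ∃ φ : hypQ R 2 →qᵢ hypQ R 2,
      ℓ - CliffordAlgebra.map φ ℓ ∉
        Submodule.map
          (LinearMap.id - (reverse (Q := hypQ R 2) :
            CliffordAlgebra (hypQ R 2) →ₗ[R] CliffordAlgebra (hypQ R 2)))
          (evenOdd (hypQ R 2) 0) := by
  by_contra! hfixed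
  set A := fockRep h2 ℓ
  have htrace : A 0 0 + A 3 3 = 1 := by
    rw [← fockRep_add_reverse_apply_zero_zero h2, hℓ, map_one, Matrix.one_apply_eq]
  have hreflect (a : R) : A 2 1 = a * A 0 0 + a * a * A 0 3 + A 3 0 + a * A 3 3 := by
    have h := fockRep_apply_two_one_eq_zero_of_mem_range h2
      (LinearMap.map_le_range (hfixed ((hypQ R 2).reflection (hypQ_normOneVector a))))
    rw [map_sub, fockRep_map_reflection, Matrix.sub_apply,
      fockMatrix_mul_mul_fockMatrix_apply_two_one] at h
    exact sub_eq_zero.mp h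
  apply ht
  linear_combination (hreflect t - hreflect 0) - t * t * (hreflect 1 - hreflect 0) +
    (t - t * t) * htrace

/-- In degree 4 and characteristic 2 (over a ring with some `t` with `t² ≠ t`), no class
`[ℓ]` with `ℓ + reverse ℓ = 1` is stabilized by the orthogonal group: for every such `ℓ` in
the even Clifford algebra there is an isometry `φ` of `Q` such that `ℓ - Cl(φ)(ℓ)` is not an
alternating element of the even Clifford algebra. -/
theorem no_canonical_semitrace_degree_four {R : Type*} [CommRing R] (h2 : (2 : R) = 0)
    (t : R) (ht : t * t ≠ t) (ℓ : CliffordAlgebra (hypQ R 2))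
    (hℓ₀ : ℓ ∈ evenOdd (hypQ R 2) 0)
    (hℓ : ℓ + reverse ℓ = 1) :
    ∃ φ : hypQ R 2 →qᵢ hypQ R 2,
      ℓ - CliffordAlgebra.map φ ℓ ∉
        Submodule.map
          (LinearMap.id - (reverse (Q := hypQ R 2) :
            CliffordAlgebra (hypQ R 2) →ₗ[R] CliffordAlgebra (hypQ R 2)))
          (evenOdd (hypQ R 2) 0) :=
  no_canonical_semitrace_degree_four_general h2 t ht ℓ hℓ
end

section
/- Let R be a commutative ring, n a natural number, E the exterior algebra of Fin n → R (the Clifford algebra of the zero quadratic form) with ordered basis products v_I, and suppose hB is an R-basis of E indexed by Finset (Fin n) with hB(I) = v_I for every I. Let π : E → R be the coordinate functional of hB at the index univ, and define the bilinear form B(x, y) = π(reverse(x) · y) on E. Then the left contraction operators are self-adjoint for B: for every g in the dual module of Fin n → R and all x, y ∈ E, π( reverse(x) · (g ⌋ y) ) = π( reverse(g ⌋ x) · y ), where g ⌋ (−) is the contraction operator (CliffordAlgebra.contractLeft for the zero quadratic form) determined by g ⌋ 1 = 0 and g ⌋ (ι(m)·w) = g(m) • w − ι(m)·(g ⌋ w).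 -/
/-!
Contraction `d = g ⌋ (−)` is a twisted derivation, `d (a * b) = d a * b + involute a * d b`, and
satisfies `reverse (d x) = -d (involute (reverse x))`. Applying the Leibniz rule to
`involute (reverse x) * y` gives
`d (involute (reverse x) * y) = reverse x * d y - reverse (d x) * y`,
so the claim follows once `π ∘ d = 0`. That holds because `d v_I` is a combination of the
`v_{I \ {i}}`, none of which is `v_univ`.
-/

open CliffordAlgebra

namespace CliffordAlgebra

variable {R M : Type*} [CommRing R] [AddCommGroup M] [Module R M] {Q : QuadraticForm R M}
  (d : Module.Dual R M)

theorem contractLeft_mul (a b : CliffordAlgebra Q) :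
    contractLeft d (a * b) = contractLeft d a * b + involute a * contractLeft d b := by
  induction a using CliffordAlgebra.left_induction generalizing b with
  | algebraMap r =>
    simp [contractLeft_algebraMap_mul, contractLeft_algebraMap]
  | add u v hu hv =>
    rw [add_mul, map_add, hu, hv, map_add, add_mul, map_add, add_mul]
    abel
  | ι_mul x m hx =>
    rw [mul_assoc, contractLeft_ι_mul, contractLeft_ι_mul, hx, map_mul, involute_ι]
    simp only [smul_mul_assoc, sub_mul, mul_add, neg_mul, mul_assoc]
    abel

theorem reverse_contractLeft (b : CliffordAlgebra Q) :
    reverse (contractLeft d b) = -contractLeft d (involute (reverse b)) := by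
  induction b using CliffordAlgebra.left_induction with
  | algebraMap r =>
    rw [contractLeft_algebraMap, map_zero, reverse.commutes, involute.commutes,
      contractLeft_algebraMap, neg_zero]
  | add u v hu hv =>
    rw [map_add, map_add, hu, hv, map_add, map_add, map_add, neg_add]
  | ι_mul x m hx =>
    rw [contractLeft_ι_mul, map_sub, map_smul, reverse.map_mul, reverse_ι, hx,
      reverse.map_mul, reverse_ι, map_mul, involute_ι, mul_neg, map_neg,
      contractLeft_mul, involute_involute, contractLeft_ι, neg_neg, neg_mul,
      ← Algebra.commutes (d m) (reverse x), ← Algebra.smul_def]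
    abel

theorem apply_reverse_mul_contractLeft_of_apply_contractLeft_eq_zero
    {N : Type*} [AddCommGroup N] [Module R N] (φ : CliffordAlgebra Q →ₗ[R] N)
    (hφ : ∀ z, φ (contractLeft d z) = 0) (x y : CliffordAlgebra Q) :
    φ (reverse x * contractLeft d y) = φ (reverse (contractLeft d x) * y) := by
  have h := hφ (involute (reverse x) * y)
  rw [contractLeft_mul, involute_involute, ← neg_neg (contractLeft d _),
    ← reverse_contractLeft, neg_mul, map_add, map_neg] at h
  exact (neg_add_eq_zero.mp h).symm

end CliffordAlgebra

section vI

variable {R : Type*} [CommRing R] {n : ℕ}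

theorem ι_mul_vI {a : Fin n} {J : Finset (Fin n)} (h : ∀ b ∈ J, a < b) :
    ι (0 : QuadraticForm R (Fin n → R)) (Pi.single a 1) * vI J = vI (insert a J) := by
  rw [vI, vI, Finset.sort_insert _ (fun b hb => (h b hb).le) fun ha => lt_irrefl a (h a ha),
    List.map_cons, List.prod_cons]

theorem contractLeft_vI_mem_span (g : Module.Dual R (Fin n → R)) (I : Finset (Fin n)) :
    contractLeft g (vI (R := R) I) ∈ Submodule.span R ((fun i => vI (I.erase i)) '' I) := by
  induction I using Finset.induction_on_min with
  | empty =>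
    rw [show vI (R := R) (n := n) ∅ = 1 by simp [vI], contractLeft_one]
    exact Submodule.zero_mem _
  | insert a J haJ ih =>
    have ha : a ∉ J := fun h => lt_irrefl a (haJ a h)
    have hι_mul : ι (0 : QuadraticForm R (Fin n → R)) (Pi.single a 1) *
        contractLeft g (vI J) ∈
          Submodule.span R ((fun i => vI ((insert a J).erase i)) '' ↑(insert a J)) := by
      refine Submodule.span_mono ?_ <| (Submodule.map_span (LinearMap.mulLeft R _) _).le
        (Submodule.mem_map_of_mem ih)
      rintro _ ⟨_, ⟨i, hi, rfl⟩, rfl⟩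
      have hai : a ≠ i := (haJ i hi).ne
      refine ⟨i, Finset.mem_insert_of_mem hi, ?_⟩
      beta_reduce
      rw [LinearMap.mulLeft_apply, ι_mul_vI fun b hb => haJ b (Finset.mem_of_mem_erase hb),
        Finset.erase_insert_of_ne hai]
    rw [← ι_mul_vI haJ, contractLeft_ι_mul]
    refine sub_mem (Submodule.smul_mem _ _ (Submodule.subset_span ?_)) hι_mul
    exact ⟨a, Finset.mem_insert_self a J, by simp only [Finset.erase_insert ha]⟩

theorem coord_univ_contractLeft
    (hB : Module.Basis (Finset (Fin n)) R (CliffordAlgebra (0 : QuadraticForm R (Fin n → R))))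
    (hBv : ∀ I : Finset (Fin n), hB I = vI I) (g : Module.Dual R (Fin n → R))
    (z : CliffordAlgebra (0 : QuadraticForm R (Fin n → R))) :
    hB.coord Finset.univ (contractLeft g z) = 0 := by
  suffices (hB.coord Finset.univ).comp (contractLeft g) = 0 from LinearMap.congr_fun this z
  refine hB.ext fun I => ?_
  have hspan : Submodule.span R ((fun i => vI (I.erase i)) '' I) ≤
      LinearMap.ker (hB.coord Finset.univ) := by
    rw [Submodule.span_le]
    rintro _ ⟨i, -, rfl⟩
    beta_reduce
    have hne : I.erase i ≠ Finset.univ := fun h =>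
      Finset.notMem_erase i I (h ▸ Finset.mem_univ i)
    rw [SetLike.mem_coe, LinearMap.mem_ker, ← hBv, Module.Basis.coord_apply,
      hB.repr_self, Finsupp.single_eq_of_ne hne.symm]
  rw [hBv]
  exact hspan (contractLeft_vI_mem_span g I)

end vI

/-- The left contraction operators `d_g = g ⌋ (−)` are self-adjoint for the bilinear form
`b_∧(x, y) = π(reverse x * y)` on the exterior algebra. -/
theorem contractLeft_self_adjoint {R : Type*} [CommRing R] {n : ℕ}
    (hB : Module.Basis (Finset (Fin n)) R (CliffordAlgebra (0 : QuadraticForm R (Fin n → R))))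
    (hBv : ∀ I : Finset (Fin n), hB I = vI I)
    (g : Module.Dual R (Fin n → R))
    (x y : CliffordAlgebra (0 : QuadraticForm R (Fin n → R))) :
    hB.coord Finset.univ (reverse x * contractLeft (Q := (0 : QuadraticForm R (Fin n → R))) g y) =
      hB.coord Finset.univ
        (reverse (contractLeft (Q := (0 : QuadraticForm R (Fin n → R))) g x) * y) :=
  apply_reverse_mul_contractLeft_of_apply_contractLeft_eq_zero g _
    (coord_univ_contractLeft hB hBv g) x y
end

section
/- Let R be a commutative ring and n a natural number, and assume either n ≡ 0 (mod 4) or 2 = 0 in R. On M = Finset (Fin n) → R define B(α, β) = Σ_{I ⊆ Fin n} (−1)^(Σ_{i ∈ I} i) · α(I) · β(Iᶜ) and q(α) = Σ_{I ⊆ Fin n, 0 ∈ I} (−1)^(Σ_{i ∈ I} i) · α(I) · α(Iᶜ). Let P : M →ₗ[R] M be the projection (P α)(I) = α(I) if 0 ∈ I and (P α)(I) = 0 otherwise. Then for every x ∈ M, the trace of the composite endomorphism P ∘ (z ↦ B(x, z) • x) equals q(x); equivalently B(x, P x) = q(x). -/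
/-- The coordinate expression of the endomorphism `ℓ_{v₁} ∘ d_{v₁*}`: the projection keeping
exactly the coordinates at sets `I` containing `0`. -/
noncomputable def Pproj (R : Type*) [CommRing R] (n : ℕ) [NeZero n] :
    (Finset (Fin n) → R) →ₗ[R] (Finset (Fin n) → R) :=
  LinearMap.pi fun I : Finset (Fin n) =>
    if (0 : Fin n) ∈ I then (LinearMap.proj I : (Finset (Fin n) → R) →ₗ[R] R) else 0

/-!
The endomorphism `P ∘ φ_B(x ⊗ x)` has rank one, so its trace is `B(x, P x)`. Reindexing the sum
defining `B(x, P x)` by `I ↦ Iᶜ` turns it into `q(x)`, because `ε(Iᶜ) = ε(I)`: the signs differ by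
`(-1) ^ (n (n - 1) / 2)`, which is `1` when `4 ∣ n` and trivially when `2 = 0`.
-/

lemma LinearMap.trace_comp_toSpanSingleton_comp {R M : Type*} [CommRing R] [AddCommGroup M]
    [Module R M] [Module.Free R M] [Module.Finite R M] (f : M →ₗ[R] M) (φ : Module.Dual R M)
    (x : M) : LinearMap.trace R M (f ∘ₗ LinearMap.toSpanSingleton R M x ∘ₗ φ) = φ (f x) := by
  rw [← LinearMap.comp_assoc, LinearMap.comp_toSpanSingleton]
  exact LinearMap.trace_smulRight φ (f x)

lemma Fin.even_sum_val_of_four_dvd {n : ℕ} (hn : 4 ∣ n) : Even (∑ i : Fin n, (i : ℕ)) := by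
  obtain ⟨k, rfl⟩ := hn
  have hgauss := Finset.sum_range_id_mul_two (4 * k)
  rw [← Fin.sum_univ_eq_sum_range] at hgauss
  exact ⟨k * (4 * k - 1), by linarith⟩

lemma neg_one_pow_sum_compl {R : Type*} [Ring R] {n : ℕ} (h : n % 4 = 0 ∨ (2 : R) = 0)
    (I : Finset (Fin n)) :
    (-1 : R) ^ (∑ i ∈ Iᶜ, (i : ℕ)) = (-1 : R) ^ (∑ i ∈ I, (i : ℕ)) := by
  rcases h with h | h
  · have hsum := Finset.sum_add_sum_compl I (fun i : Fin n => (i : ℕ))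
    have heven := Fin.even_sum_val_of_four_dvd (Nat.dvd_of_mod_eq_zero h)
    rw [← hsum, Nat.even_iff] at heven
    rw [neg_one_pow_eq_pow_mod_two, neg_one_pow_eq_pow_mod_two (R := R) (n := ∑ i ∈ I, _)]
    congr 1
    omega
  · have hneg : (-1 : R) = 1 := neg_eq_iff_add_eq_zero.2 (one_add_one_eq_two.trans h)
    rw [hneg, one_pow, one_pow]

lemma Pproj_apply {R : Type*} [CommRing R] {n : ℕ} [NeZero n] (x : Finset (Fin n) → R)
    (I : Finset (Fin n)) : Pproj R n x I = if (0 : Fin n) ∈ I then x I else 0 := by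
  by_cases h0 : (0 : Fin n) ∈ I <;> simp [Pproj, h0]

lemma Bwedge_Pproj {R : Type*} [CommRing R] {n : ℕ} [NeZero n]
    (h : n % 4 = 0 ∨ (2 : R) = 0) (x : Finset (Fin n) → R) :
    Bwedge x (Pproj R n x) = qwedge x := by
  rw [Bwedge, qwedge, Finset.sum_filter, ← compl_involutive.bijective.sum_comp]
  refine Finset.sum_congr rfl fun I _ => ?_
  simp only [compl_compl, Pproj_apply, neg_one_pow_sum_compl h]
  split_ifs <;> ring

/-- The canonical semi-trace corresponds to `q_∧`: the trace of `P ∘ φ_B(x ⊗ x)` equals `q(x)`;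
equivalently `B(x, P x) = q(x)`. -/
theorem trace_P_comp_phi_eq_qwedge {R : Type*} [CommRing R] {n : ℕ} [NeZero n]
    (h : n % 4 = 0 ∨ (2 : R) = 0) (x : Finset (Fin n) → R) :
    LinearMap.trace R (Finset (Fin n) → R)
        (Pproj R n ∘ₗ (LinearMap.toSpanSingleton R (Finset (Fin n) → R) x ∘ₗ BwedgeDual x)) =
      qwedge x ∧
    Bwedge x (Pproj R n x) = qwedge x := by
  have hB := Bwedge_Pproj h x
  refine ⟨?_, hB⟩
  rw [LinearMap.trace_comp_toSpanSingleton_comp, BwedgeDual_apply, hB]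
end
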